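/- If L is a nilpotent cyclic (right) Leibniz algebra of dimension n, and L* is a Leibniz algebra whose subalgebra lattice is isomorphic to that of L, then L* is also nilpotent cyclic of dimension n (hence L* ≅ L). -/

import Mathlib

/-- A subalgebra of a Leibniz algebra: a submodule closed under the bracket. -/
def IsSubalg {K : Type*} [Field K] {L : Type*} [AddCommGroup L] [Module K L]
    (b : L →ₗ[K] L →ₗ[K] L) (S : Submodule K L) : Prop :=
  ∀ x ∈ S, ∀ y ∈ S, b x y ∈ S

/-- The subalgebra generated by an element. -/
def gen {K : Type*} [Field K] {L : Type*} [AddCommGroup L] [Module K L]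
    (b : L →ₗ[K] L →ₗ[K] L) (x : L) : Submodule K L :=
  sInf {S : Submodule K L | IsSubalg b S ∧ x ∈ S}

/-- Lower central series: `lcs b 0 = L`, `lcs b (k+1) = [lcs b k, L]`. -/
def lcs {K : Type*} [Field K] {L : Type*} [AddCommGroup L] [Module K L]
    (b : L →ₗ[K] L →ₗ[K] L) : ℕ → Submodule K L
  | 0 => ⊤
  | n + 1 => Submodule.span K {z : L | ∃ x ∈ lcs b n, ∃ y : L, z = b x y}

/-!
Let `T` be right multiplication by the generator `x` of a cyclic right Leibniz algebra `L`.
The Leibniz identity puts `range T` in the right annihilator, and `L = K x ⊕ range T`, so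
every bracket is `[a, γ x + r] = γ T a`. Hence `L` is nilpotent iff `T` is, and this happens
iff `range T` contains every proper subalgebra: one direction is a Nakayama argument for the
nilpotent `T`, the other uses the Fitting decomposition of `T`. A lattice isomorphism carries
this greatest proper subalgebra to one of `L'`, and any element outside it generates `L'`,
which is therefore cyclic and nilpotent. Every subspace of `range T` is a subalgebra, so the
subspace lattices of `range T` and `range T'` are isomorphic and the dimensions agree;
finally, a nilpotent operator with a cyclic vector is determined up to conjugacy by the
dimension.
-/

open Submodule LinearMap

section LinearAlgebra

theorem Submodule.eq_top_of_sup_range_eq_top {R M : Type*} [Semiring R] [AddCommMonoid M]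
    [Module R M] {T : Module.End R M} (hT : IsNilpotent T) {S : Submodule R M}
    (hS : ∀ s ∈ S, T s ∈ S) (h : S ⊔ range T = ⊤) : S = ⊤ := by
  obtain ⟨k, hk⟩ := hT
  have key : ∀ i, S ⊔ range (T ^ i) = ⊤ := by
    intro i
    induction i with
    | zero => rw [pow_zero, Module.End.one_eq_id, range_id, sup_top_eq]
    | succ i ih =>
      refine eq_top_iff.2 (h ▸ sup_le le_sup_left ?_)
      calc range T = map T (S ⊔ range (T ^ i)) := by rw [ih, map_top]
        _ = map T S ⊔ range (T ^ (i + 1)) := by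
          rw [map_sup, pow_succ', Module.End.mul_eq_comp, range_comp]
        _ ≤ S ⊔ range (T ^ (i + 1)) := sup_le_sup_right (map_le_iff_le_comap.2 hS) _
  simpa [hk] using key k

variable {K V W : Type*} [Field K] [AddCommGroup V] [Module K V] [AddCommGroup W] [Module K W]

theorem Module.finrank_eq_of_orderIso [FiniteDimensional K V] [FiniteDimensional K W]
    (φ : Submodule K V ≃o Submodule K W) : Module.finrank K V = Module.finrank K W := by
  have h := Order.krullDim_eq_of_orderIso φ
  rw [← Module.coe_length, ← Module.coe_length, Module.length_eq_finrank,
    Module.length_eq_finrank] at h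
  exact_mod_cast h

theorem IsNilpotent.pow_finrank_eq_zero [FiniteDimensional K V] {T : Module.End K V}
    (hT : IsNilpotent T) : T ^ Module.finrank K V = 0 := by
  simpa [hT.charpoly_eq_X_pow_finrank] using T.aeval_self_charpoly

theorem span_range_fin_pow_apply_eq_top [FiniteDimensional K V] {T : Module.End K V}
    (hT : IsNilpotent T) {x : V} (hx : span K (Set.range fun i => (T ^ i) x) = ⊤) :
    span K (Set.range fun i : Fin (Module.finrank K V) => (T ^ (i : ℕ)) x) = ⊤ := by
  rw [eq_top_iff, ← hx, span_le]
  rintro _ ⟨i, rfl⟩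
  by_cases hi : i < Module.finrank K V
  · exact subset_span ⟨⟨i, hi⟩, rfl⟩
  · simp only [pow_eq_zero_of_le (not_lt.1 hi) hT.pow_finrank_eq_zero, LinearMap.zero_apply]
    exact zero_mem _

theorem exists_linearEquiv_conj_of_isNilpotent [FiniteDimensional K V] [FiniteDimensional K W]
    {T : Module.End K V} {T' : Module.End K W} (hT : IsNilpotent T) (hT' : IsNilpotent T')
    {x : V} {z : W} (hx : span K (Set.range fun i => (T ^ i) x) = ⊤)
    (hz : span K (Set.range fun i => (T' ^ i) z) = ⊤)
    (hdim : Module.finrank K V = Module.finrank K W) :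
    ∃ e : V ≃ₗ[K] W, e x = z ∧ ∀ v, e (T v) = T' (e v) := by
  let B := basisOfTopLeSpanOfCardEqFinrank _ (span_range_fin_pow_apply_eq_top hT hx).ge
    (Fintype.card_fin _)
  let B' := basisOfTopLeSpanOfCardEqFinrank _ (span_range_fin_pow_apply_eq_top hT' hz).ge
    (Fintype.card_fin _)
  let e := B.equiv B' (finCongr hdim)
  have he : ∀ i, e ((T ^ i) x) = (T' ^ i) z := by
    intro i
    by_cases hi : i < Module.finrank K V
    · simpa [B, B'] using B.equiv_apply ⟨i, hi⟩ B' (finCongr hdim)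
    · rw [pow_eq_zero_of_le (not_lt.1 hi) hT.pow_finrank_eq_zero,
        pow_eq_zero_of_le (hdim ▸ not_lt.1 hi) hT'.pow_finrank_eq_zero, LinearMap.zero_apply,
        LinearMap.zero_apply, map_zero]
  refine ⟨e, by simpa using he 0, fun v => ?_⟩
  have hcomm : (e : V →ₗ[K] W) ∘ₗ T = T' ∘ₗ e := by
    refine ext_on_range hx fun i => ?_
    simp only [coe_comp, LinearEquiv.coe_coe, Function.comp_apply]
    rw [← Module.End.mul_apply, ← pow_succ', he, he, pow_succ', Module.End.mul_apply]
  exact LinearMap.congr_fun hcomm v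

end LinearAlgebra

section OrderIso

variable {α β : Type*} [PartialOrder α] [PartialOrder β] {p : α → Prop} {q : β → Prop}

def OrderIso.subtypeLeCongr (θ : Subtype p ≃o Subtype q) (a : Subtype p) (a' : β)
    (hθa : (θ a).1 = a') (hp : ∀ c ≤ a.1, p c) (hq : ∀ d ≤ a', q d) :
    {c // c ≤ a.1} ≃o {d // d ≤ a'} where
  toFun c := ⟨θ ⟨c.1, hp c.1 c.2⟩, hθa ▸ θ.monotone (Subtype.mk_le_mk.2 c.2)⟩
  invFun d := ⟨θ.symm ⟨d.1, hq d.1 d.2⟩,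
    θ.symm_apply_le.2 (Subtype.mk_le_mk.2 (hθa ▸ d.2 : d.1 ≤ (θ a).1))⟩
  left_inv c := by simp
  right_inv d := by simp
  map_rel_iff' := by simp

theorem Subtype.val_eq_top_iff_forall_le [OrderTop α] (hp : p ⊤) (c : Subtype p) :
    c.1 = ⊤ ↔ ∀ d, d ≤ c :=
  ⟨fun h d => show d.1 ≤ c.1 from h ▸ le_top, fun h => top_le_iff.1 (h ⟨⊤, hp⟩)⟩

theorem OrderIso.subtype_val_eq_top_iff [OrderTop α] [OrderTop β] (hp : p ⊤) (hq : q ⊤)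
    (θ : Subtype p ≃o Subtype q) (c : Subtype p) : (θ c).1 = ⊤ ↔ c.1 = ⊤ := by
  simp only [Subtype.val_eq_top_iff_forall_le hq, Subtype.val_eq_top_iff_forall_le hp,
    θ.surjective.forall, θ.le_iff_le]

theorem OrderIso.subtype_eq_top_or_le [OrderTop α] [OrderTop β] (hp : p ⊤) (hq : q ⊤)
    (θ : Subtype p ≃o Subtype q) {a : Subtype p} (h : ∀ c : Subtype p, c.1 = ⊤ ∨ c ≤ a)
    (d : Subtype q) : d.1 = ⊤ ∨ d ≤ θ a := by
  obtain ⟨c, rfl⟩ := θ.surjective d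
  rw [θ.subtype_val_eq_top_iff hp hq, θ.le_iff_le]
  exact h c

end OrderIso

section Leibniz

variable {K L L' : Type*} [Field K] [AddCommGroup L] [Module K L] [AddCommGroup L'] [Module K L']
  {b : L →ₗ[K] L →ₗ[K] L} {b' : L' →ₗ[K] L' →ₗ[K] L'}

theorem isSubalg_bot : IsSubalg b ⊥ := by
  intro u _ v hv
  rw [(mem_bot K).1 hv, map_zero]
  exact zero_mem _

theorem isSubalg_top : IsSubalg b ⊤ := fun _ _ _ _ => mem_top

theorem apply_eq_zero_of_mem_ker_flip {c : L} (hc : c ∈ ker b.flip) (a : L) : b a c = 0 :=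
  LinearMap.congr_fun (mem_ker.1 hc) a

theorem isSubalg_of_le_ker_flip {S : Submodule K L} (hS : S ≤ ker b.flip) : IsSubalg b S := by
  intro u _ v hv
  rw [apply_eq_zero_of_mem_ker_flip (hS hv)]
  exact zero_mem _

theorem isSubalg_gen (x : L) : IsSubalg b (gen b x) := by
  intro u hu v hv
  rw [gen, mem_sInf] at *
  exact fun S hS => hS.1 u (hu S hS) v (hv S hS)

theorem mem_gen (x : L) : x ∈ gen b x := mem_sInf.2 fun _ hS => hS.2

theorem gen_le {S : Submodule K L} {x : L} (hS : IsSubalg b S) (hx : x ∈ S) : gen b x ≤ S :=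
  sInf_le ⟨hS, hx⟩

theorem ne_zero_of_gen_eq_top [Nontrivial L] {x : L} (hgen : gen b x = ⊤) : x ≠ 0 := by
  rintro rfl
  exact bot_ne_top (eq_top_iff.2 (hgen ▸ gen_le isSubalg_bot (zero_mem ⊥)))

theorem subsingleton_of_orderIso [Subsingleton L]
    (θ : {S : Submodule K L // IsSubalg b S} ≃o {S : Submodule K L' // IsSubalg b' S}) :
    Subsingleton L' := by
  refine (Submodule.subsingleton_iff K).1 (subsingleton_iff_bot_eq_top.1 ?_)
  exact congrArg Subtype.val <| θ.symm.injective <|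
    Subsingleton.elim (θ.symm ⟨⊥, isSubalg_bot⟩) (θ.symm ⟨⊤, isSubalg_top⟩)

theorem pow_flip_apply_mem_lcs (y a : L) (k : ℕ) : (b.flip y ^ k) a ∈ lcs b k := by
  induction k with
  | zero => exact mem_top
  | succ k ih =>
    rw [pow_succ', Module.End.mul_apply, flip_apply]
    exact subset_span ⟨_, ih, y, rfl⟩

section RightLeibniz

variable (hb : ∀ x y z : L, b x (b y z) = b (b x y) z - b (b x z) y)
include hb

theorem flip_apply_mem_ker_flip {c : L} (hc : c ∈ ker b.flip) (y : L) : b c y ∈ ker b.flip := by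
  refine mem_ker.2 (LinearMap.ext fun a => ?_)
  simp [hb, apply_eq_zero_of_mem_ker_flip hc]

theorem apply_self_mem_ker_flip (y : L) : b y y ∈ ker b.flip :=
  mem_ker.2 (LinearMap.ext fun a => by simp [hb])

theorem pow_succ_flip_apply_self_mem_ker_flip (x : L) (i : ℕ) :
    (b.flip x ^ (i + 1)) x ∈ ker b.flip := by
  induction i with
  | zero => simpa using apply_self_mem_ker_flip hb x
  | succ i ih =>
    rw [pow_succ', Module.End.mul_apply, flip_apply]
    exact flip_apply_mem_ker_flip hb ih x

section Cyclic

variable {x : L} (hgen : gen b x = ⊤)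
include hgen

theorem span_range_pow_flip_apply_eq_top : span K (Set.range fun i => (b.flip x ^ i) x) = ⊤ := by
  set P := span K (Set.range fun i => (b.flip x ^ i) x)
  have hP : ∀ a ∈ P, b a x ∈ P := by
    refine fun a ha => (span_le (p := P.comap (b.flip x))).2 ?_ ha
    rintro _ ⟨i, rfl⟩
    exact subset_span ⟨i + 1, by simp only [pow_succ', Module.End.mul_apply]⟩
  have hsub : IsSubalg b P := by
    intro u hu v hv
    refine (span_le (p := P.comap (b u))).2 ?_ hv
    rintro _ ⟨_ | i, rfl⟩
    · exact hP u hu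
    · rw [SetLike.mem_coe, mem_comap,
        apply_eq_zero_of_mem_ker_flip (pow_succ_flip_apply_self_mem_ker_flip hb x i)]
      exact zero_mem _
  exact eq_top_iff.2 (hgen ▸ gen_le hsub (subset_span ⟨0, rfl⟩))

theorem range_flip_le_ker_flip : range (b.flip x) ≤ ker b.flip := by
  rw [← Submodule.map_top, ← span_range_pow_flip_apply_eq_top hb hgen, Submodule.map_span,
    span_le]
  rintro _ ⟨_, ⟨i, rfl⟩, rfl⟩
  rw [← Module.End.mul_apply, ← pow_succ']
  exact pow_succ_flip_apply_self_mem_ker_flip hb x i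

theorem span_singleton_sup_range_flip_eq_top : K ∙ x ⊔ range (b.flip x) = ⊤ := by
  rw [eq_top_iff, ← span_range_pow_flip_apply_eq_top hb hgen, span_le]
  rintro _ ⟨_ | i, rfl⟩
  · exact mem_sup_left (mem_span_singleton_self x)
  · simp only [pow_succ', Module.End.mul_apply]
    exact mem_sup_right (mem_range_self _ _)

theorem exists_eq_smul_add_mem_range (c : L) :
    ∃ γ : K, ∃ r ∈ range (b.flip x), c = γ • x + r := by
  obtain ⟨_, hy, r, hr, rfl⟩ :=
    mem_sup.1 (span_singleton_sup_range_flip_eq_top hb hgen ▸ mem_top : c ∈ _)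
  obtain ⟨γ, rfl⟩ := mem_span_singleton.1 hy
  exact ⟨γ, r, hr, rfl⟩

theorem apply_smul_add_of_mem_range (a : L) (γ : K) {r : L} (hr : r ∈ range (b.flip x)) :
    b a (γ • x + r) = γ • b a x := by
  rw [map_add, map_smul, apply_eq_zero_of_mem_ker_flip (range_flip_le_ker_flip hb hgen hr),
    add_zero]

theorem isSubalg_of_le_range_flip {S : Submodule K L} (hS : S ≤ range (b.flip x)) :
    IsSubalg b S :=
  isSubalg_of_le_ker_flip (hS.trans (range_flip_le_ker_flip hb hgen))

theorem isSubalg_of_flip_mem {S : Submodule K L} (hS : ∀ a ∈ S, b a x ∈ S) :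
    IsSubalg b S := by
  intro a ha c _
  obtain ⟨γ, r, hr, rfl⟩ := exists_eq_smul_add_mem_range hb hgen c
  rw [apply_smul_add_of_mem_range hb hgen a γ hr]
  exact S.smul_mem γ (hS a ha)

theorem self_mem_range_flip_iff : x ∈ range (b.flip x) ↔ x = 0 := by
  refine ⟨fun hx => ?_, fun hx => hx ▸ zero_mem _⟩
  have := mem_ker.1 (range_flip_le_ker_flip hb hgen hx)
  rwa [this, range_zero, mem_bot] at hx

theorem isCoatom_range_flip (hx : x ≠ 0) : IsCoatom (range (b.flip x)) := by
  have h := covBy_span_singleton_sup (mt (self_mem_range_flip_iff hb hgen).1 hx)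
  rwa [span_singleton_sup_range_flip_eq_top hb hgen, covBy_top_iff] at h

theorem finrank_range_flip_add_one [FiniteDimensional K L] (hx : x ≠ 0) :
    Module.finrank K (range (b.flip x)) + 1 = Module.finrank K L := by
  rw [← finrank_span_singleton (K := K) hx, finrank_add_eq_of_isCompl]
  exact isCompl_span_singleton_of_isCoatom_of_notMem (isCoatom_range_flip hb hgen hx)
    (mt (self_mem_range_flip_iff hb hgen).1 hx)

theorem lcs_le_range_pow_flip (k : ℕ) : lcs b k ≤ range (b.flip x ^ k) := by
  induction k with
  | zero => rw [pow_zero, Module.End.one_eq_id, range_id]; exact le_top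
  | succ k ih =>
    simp only [lcs]
    rw [span_le]
    rintro _ ⟨a, ha, c, rfl⟩
    obtain ⟨w, rfl⟩ := ih ha
    obtain ⟨γ, r, hr, rfl⟩ := exists_eq_smul_add_mem_range hb hgen c
    rw [apply_smul_add_of_mem_range hb hgen _ γ hr, ← flip_apply (f := b),
      ← Module.End.mul_apply, ← pow_succ']
    exact smul_mem _ γ (mem_range_self _ w)

theorem exists_lcs_eq_bot_iff : (∃ k, lcs b k = ⊥) ↔ IsNilpotent (b.flip x) := by
  refine ⟨fun ⟨k, hk⟩ => ⟨k, LinearMap.ext fun a => ?_⟩, fun ⟨k, hk⟩ => ⟨k, ?_⟩⟩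
  · simpa [hk] using pow_flip_apply_mem_lcs (b := b) x a k
  · simpa [hk] using lcs_le_range_pow_flip hb hgen k

theorem eq_top_or_le_range_flip_of_isSubalg (hT : IsNilpotent (b.flip x)) {S : Submodule K L}
    (hS : IsSubalg b S) : S = ⊤ ∨ S ≤ range (b.flip x) := by
  refine or_iff_not_imp_right.2 fun hle => ?_
  obtain ⟨y, hyS, hy⟩ := SetLike.not_le_iff_exists.1 hle
  obtain ⟨γ, r, hr, rfl⟩ := exists_eq_smul_add_mem_range hb hgen y
  have hγ : γ ≠ 0 := by
    rintro rfl
    rw [zero_smul, zero_add] at hy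
    exact hy hr
  have hinv : ∀ s ∈ S, b.flip x s ∈ S := fun s hs => by
    have := S.smul_mem γ⁻¹ (hS s hs _ hyS)
    rwa [apply_smul_add_of_mem_range hb hgen s γ hr, smul_smul, inv_mul_cancel₀ hγ,
      one_smul] at this
  have hx : x ∈ S ⊔ range (b.flip x) := by
    have : γ • x + r ∈ S ⊔ range (b.flip x) := mem_sup_left hyS
    rwa [Submodule.add_mem_iff_left _ (mem_sup_right hr), smul_mem_iff _ hγ] at this
  refine eq_top_of_sup_range_eq_top hT hinv (eq_top_iff.2 ?_)
  rw [← span_singleton_sup_range_flip_eq_top hb hgen]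
  exact sup_le ((span_singleton_le_iff_mem _ _).2 hx) le_sup_right

theorem isNilpotent_flip_of_forall_isSubalg [FiniteDimensional K L] (hx : x ≠ 0)
    (h : ∀ S, IsSubalg b S → S = ⊤ ∨ S ≤ range (b.flip x)) : IsNilpotent (b.flip x) := by
  obtain ⟨N, hN⟩ := Filter.eventually_atTop.1 (eventually_isCompl_ker_pow_range_pow (b.flip x))
  have hker : IsSubalg b (ker (b.flip x ^ (N + 1))) := by
    refine isSubalg_of_flip_mem hb hgen fun a ha => ?_
    rw [mem_ker] at ha ⊢
    rw [← flip_apply (f := b), ← Module.End.mul_apply, ← pow_succ, pow_succ',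
      Module.End.mul_apply, ha, map_zero]
  refine (h _ hker).elim (fun htop => ⟨N + 1, ker_eq_top.1 htop⟩) fun hle => ?_
  have hrange : range (b.flip x ^ (N + 1)) ≤ range (b.flip x) := by
    rw [pow_succ', Module.End.mul_eq_comp]
    exact range_comp_le_range _ _
  have hsup := (hN (N + 1) (Nat.le_succ N)).codisjoint.eq_top
  exact absurd ((self_mem_range_flip_iff hb hgen).1 (sup_le hle hrange (hsup ▸ mem_top))) hx

end Cyclic

theorem exists_gen_eq_top_of_forall_le [FiniteDimensional K L] {M : Submodule K L} (hM : M ≠ ⊤)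
    (hmax : ∀ S, IsSubalg b S → S = ⊤ ∨ S ≤ M) :
    ∃ z, gen b z = ⊤ ∧ z ≠ 0 ∧ range (b.flip z) = M ∧ IsNilpotent (b.flip z) := by
  obtain ⟨z, -, hz⟩ := SetLike.exists_of_lt (lt_top_iff_ne_top.2 hM)
  have hgen : gen b z = ⊤ := (hmax _ (isSubalg_gen z)).resolve_right fun h => hz (h (mem_gen z))
  have hz0 : z ≠ 0 := fun h => hz (h ▸ zero_mem _)
  have hcoatom := isCoatom_range_flip hb hgen hz0
  have hrange : range (b.flip z) = M := ((hcoatom.le_iff_eq hM).1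
    ((hmax _ (isSubalg_of_le_range_flip hb hgen le_rfl)).resolve_left hcoatom.ne_top)).symm
  exact ⟨z, hgen, hz0, hrange,
    isNilpotent_flip_of_forall_isSubalg hb hgen hz0 (hrange ▸ hmax)⟩

end RightLeibniz

end Leibniz

theorem exists_linearEquiv_map_bracket {K L L' : Type*} [Field K] [AddCommGroup L] [Module K L]
    [FiniteDimensional K L] [AddCommGroup L'] [Module K L'] [FiniteDimensional K L']
    {b : L →ₗ[K] L →ₗ[K] L} {b' : L' →ₗ[K] L' →ₗ[K] L'}
    (hb : ∀ x y z : L, b x (b y z) = b (b x y) z - b (b x z) y)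
    (hb' : ∀ x y z : L', b' x (b' y z) = b' (b' x y) z - b' (b' x z) y)
    {x : L} {z : L'} (hgen : gen b x = ⊤) (hgen' : gen b' z = ⊤)
    (hT : IsNilpotent (b.flip x)) (hT' : IsNilpotent (b'.flip z))
    (hdim : Module.finrank K L = Module.finrank K L') :
    ∃ e : L ≃ₗ[K] L', ∀ u v : L, e (b u v) = b' (e u) (e v) := by
  obtain ⟨e, hex, heT⟩ := exists_linearEquiv_conj_of_isNilpotent hT hT'
    (span_range_pow_flip_apply_eq_top hb hgen) (span_range_pow_flip_apply_eq_top hb' hgen') hdim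
  refine ⟨e, fun u v => ?_⟩
  obtain ⟨γ, _, ⟨w, rfl⟩, rfl⟩ := exists_eq_smul_add_mem_range hb hgen v
  have hev : e (γ • x + b.flip x w) = γ • z + b'.flip z (e w) := by
    rw [map_add, map_smul, hex, heT]
  rw [hev, apply_smul_add_of_mem_range hb hgen _ _ (mem_range_self _ w),
    apply_smul_add_of_mem_range hb' hgen' _ _ (mem_range_self _ _), map_smul]
  exact congrArg (γ • ·) (heT u)

/-- If `L` is a nilpotent cyclic right Leibniz algebra of dimension `n`, and `L'`
is a right Leibniz algebra whose subalgebra lattice is isomorphic to that of `L`,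
then `L'` is also nilpotent cyclic of dimension `n`; hence `L' ≅ L`. -/
theorem lattice_iso_nilpotent_cyclic {K : Type*} [Field K]
    {L : Type*} [AddCommGroup L] [Module K L] [FiniteDimensional K L]
    {L' : Type*} [AddCommGroup L'] [Module K L'] [FiniteDimensional K L']
    (b : L →ₗ[K] L →ₗ[K] L) (b' : L' →ₗ[K] L' →ₗ[K] L')
    (hb : ∀ x y z : L, b x (b y z) = b (b x y) z - b (b x z) y)
    (hb' : ∀ x y z : L', b' x (b' y z) = b' (b' x y) z - b' (b' x z) y)
    (hnilp : ∃ k : ℕ, lcs b k = ⊥)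
    (n : ℕ) (hdim : Module.finrank K L = n)
    (x : L) (hgen : gen b x = ⊤)
    (θ : {S : Submodule K L // IsSubalg b S} ≃o {S : Submodule K L' // IsSubalg b' S}) :
    (∃ k : ℕ, lcs b' k = ⊥) ∧ (∃ x' : L', gen b' x' = ⊤) ∧
      Module.finrank K L' = n ∧
      ∃ e : L ≃ₗ[K] L', ∀ u v : L, e (b u v) = b' (e u) (e v) := by
  rcases subsingleton_or_nontrivial L with hL | hL
  · have := subsingleton_of_orderIso θ
    exact ⟨⟨0, Subsingleton.elim _ _⟩, ⟨0, Subsingleton.elim _ _⟩, by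
      rw [← hdim, Module.finrank_zero_of_subsingleton, Module.finrank_zero_of_subsingleton],
      LinearEquiv.ofSubsingleton L L', fun _ _ => Subsingleton.elim _ _⟩
  have hx : x ≠ 0 := ne_zero_of_gen_eq_top hgen
  have hT := (exists_lcs_eq_bot_iff hb hgen).1 hnilp
  let U : {S // IsSubalg b S} := ⟨range (b.flip x), isSubalg_of_le_range_flip hb hgen le_rfl⟩
  have hM : (θ U).1 ≠ ⊤ := (θ.subtype_val_eq_top_iff isSubalg_top isSubalg_top U).not.2
    (isCoatom_range_flip hb hgen hx).ne_top
  have hmax : ∀ S, IsSubalg b' S → S = ⊤ ∨ S ≤ (θ U).1 := fun S hS =>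
    θ.subtype_eq_top_or_le isSubalg_top isSubalg_top
      (fun c => eq_top_or_le_range_flip_of_isSubalg hb hgen hT c.2) ⟨S, hS⟩
  obtain ⟨z, hgen', hz0, hM', hT'⟩ := exists_gen_eq_top_of_forall_le hb' hM hmax
  have hrank : Module.finrank K (range (b.flip x)) = Module.finrank K (range (b'.flip z)) :=
    Module.finrank_eq_of_orderIso <| (MapSubtype.orderIso _).trans <|
      (θ.subtypeLeCongr U _ hM'.symm (fun _ => isSubalg_of_le_range_flip hb hgen)
        (fun _ => isSubalg_of_le_range_flip hb' hgen')).trans (MapSubtype.orderIso _).symm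
  have hdim' : Module.finrank K L' = n := by
    rw [← hdim, ← finrank_range_flip_add_one hb hgen hx,
      ← finrank_range_flip_add_one hb' hgen' hz0, hrank]
  exact ⟨(exists_lcs_eq_bot_iff hb' hgen').2 hT', ⟨z, hgen'⟩, hdim',
    exists_linearEquiv_map_bracket hb hb' hgen hgen' hT hT' (hdim.trans hdim'.symm)⟩
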